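/- arXiv:1008.1837 — 4 statements merged into one kernel-verified Lean document; each statement's English description precedes it below -/
import Mathlib

section
/- Let (G,γ) be a Z²-colored multigraph and (G',γ) a subgraph of (G,γ). Suppose adding a colored edge ij to G strictly increases the Z²-rank, and ij has both endpoints contained within a single connected component of G'. Then adding ij to G' also strictly increases the Z²-rank of (G',γ). -/
open Finset

section Defs
variable {V E : Type} [Fintype V] [DecidableEq V] [Fintype E] [DecidableEq E]

/-- Signed incidence of edge `e` at vertex `v`. -/
def incid (th hd : E → V) (e : E) (v : V) : ℤ :=
  (if hd e = v then 1 else 0) - (if th e = v then 1 else 0)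

/-- `x : E → ℤ` is a cycle (1-chain with zero boundary) supported on the edge set `S`. -/
def IsCycle (th hd : E → V) (S : Finset E) (x : E → ℤ) : Prop :=
  (∀ e ∉ S, x e = 0) ∧ ∀ v : V, ∑ e, x e * incid th hd e v = 0

/-- Signed color-sum of a chain. -/
def rho (γ : E → ℤ × ℤ) (x : E → ℤ) : ℤ × ℤ := ∑ e, x e • γ e

def q2 (p : ℤ × ℤ) : ℚ × ℚ := ((p.1 : ℚ), (p.2 : ℚ))

/-- The ℤ²-rank of the colored subgraph with edge set `S`. -/
noncomputable def zrank (th hd : E → V) (γ : E → ℤ × ℤ) (S : Finset E) : ℕ :=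
  Module.finrank ℚ (Submodule.span ℚ (q2 '' (rho γ '' {x | IsCycle th hd S x})))

/-- Adjacency via an edge in `S`. -/
def adjS (th hd : E → V) (S : Finset E) (u v : V) : Prop :=
  ∃ e ∈ S, (th e = u ∧ hd e = v) ∨ (th e = v ∧ hd e = u)

/-- Vertices spanned by the edge set `S`. -/
def verts (th hd : E → V) (S : Finset E) : Finset V := S.image th ∪ S.image hd

/-- Number of connected components of the subgraph induced by the edge set `S`
(on the vertices it spans). -/
noncomputable def ncomp (th hd : E → V) (S : Finset E) : ℕ :=
  Nat.card (Quotient (Relation.EqvGen.setoid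
    (fun a b : {v : V // v ∈ verts th hd S} => adjS th hd S a.1 b.1)))

/-- The subgraph with edge set `S` is connected and spans all vertices. -/
def Conn (th hd : E → V) (S : Finset E) : Prop :=
  ∀ u v : V, Relation.EqvGen (adjS th hd S) u v

/-- The function `f(G') = n' + rk_{ℤ²}(G') − c'`. -/
noncomputable def fZ (th hd : E → V) (γ : E → ℤ × ℤ) (S : Finset E) : ℤ :=
  ((verts th hd S).card : ℤ) + (zrank th hd γ S : ℤ) - (ncomp th hd S : ℤ)

end Defs

/-- Edge set of the complete multigraph `K_n^{6,4}`. -/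
def KE (n : ℕ) : Type :=
  ({p : Fin n × Fin n // p.1 < p.2} × Fin 6) ⊕ (Fin n × Fin 4)

instance (n : ℕ) : Fintype (KE n) := by unfold KE; infer_instance
instance (n : ℕ) : DecidableEq (KE n) := by unfold KE; infer_instance

def Kt (n : ℕ) : KE n → Fin n := Sum.elim (fun q => q.1.1.1) (fun q => q.1)
def Kh (n : ℕ) : KE n → Fin n := Sum.elim (fun q => q.1.1.2) (fun q => q.1)

/- A path in `S` between the endpoints of `e₀`, closed up by `e₀`, is a cycle `x₀` of
`S ∪ {e₀}` passing once through `e₀`. Subtracting `y e₀ • x₀` from any cycle `y` of `G` gives a cycle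
avoiding `e₀`, so if `ρ(x₀)` were already in the span of the cycles of `S ⊆ G - e₀`, the rank of `G`
would equal that of `G - e₀`. Hence `ρ(x₀)` is new for `S`, and adding `e₀` to `S` raises the rank. -/

section CycleSpan
variable {V E : Type} [DecidableEq V] [Fintype E] (th hd : E → V) (γ : E → ℤ × ℤ)

noncomputable def cycleSpan (S : Finset E) : Submodule ℚ (ℚ × ℚ) :=
  Submodule.span ℚ (q2 '' (rho γ '' {x | IsCycle th hd S x}))

theorem q2_rho_mem_cycleSpan {S : Finset E} {x : E → ℤ} (hx : IsCycle th hd S x) :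
    q2 (rho γ x) ∈ cycleSpan th hd γ S :=
  Submodule.subset_span ⟨rho γ x, ⟨x, hx, rfl⟩, rfl⟩

theorem IsCycle.mono {S T : Finset E} (hST : S ⊆ T) {x : E → ℤ} (hx : IsCycle th hd S x) :
    IsCycle th hd T x :=
  ⟨fun e he => hx.1 e (fun h => he (hST h)), hx.2⟩

theorem cycleSpan_mono {S T : Finset E} (hST : S ⊆ T) :
    cycleSpan th hd γ S ≤ cycleSpan th hd γ T :=
  Submodule.span_mono (Set.image_mono (Set.image_mono fun _ => IsCycle.mono th hd hST))

theorem IsCycle.sub_smul {S : Finset E} {x y : E → ℤ} (hx : IsCycle th hd S x)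
    (hy : IsCycle th hd S y) (c : ℤ) : IsCycle th hd S (x - c • y) := by
  refine ⟨fun e he => by simp [hx.1 e he, hy.1 e he], fun v => ?_⟩
  simp only [Pi.sub_apply, Pi.smul_apply, smul_eq_mul, sub_mul, Finset.sum_sub_distrib, mul_assoc,
    ← Finset.mul_sum, hx.2 v, hy.2 v, mul_zero, sub_zero]

theorem IsCycle.erase [DecidableEq E] {S : Finset E} {x : E → ℤ} (hx : IsCycle th hd S x)
    {e₀ : E} (h₀ : x e₀ = 0) : IsCycle th hd (S.erase e₀) x := by
  refine ⟨fun e he => ?_, hx.2⟩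
  by_cases h : e = e₀
  · exact h ▸ h₀
  · exact hx.1 e fun heS => he (Finset.mem_erase.2 ⟨h, heS⟩)

omit [DecidableEq V] in
theorem q2_rho_sub_smul (x y : E → ℤ) (c : ℤ) :
    q2 (rho γ (x - c • y)) = q2 (rho γ x) - (c : ℚ) • q2 (rho γ y) := by
  simp only [q2, rho, Prod.ext_iff]
  constructor <;>
    simp [Prod.fst_sum, Prod.snd_sum, Finset.sum_sub_distrib, Finset.mul_sum, sub_mul, mul_assoc]

theorem exists_chain_of_eqvGen [DecidableEq E] {S : Finset E} {u v : V}
    (h : Relation.EqvGen (adjS th hd S) u v) :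
    ∃ x : E → ℤ, (∀ e ∉ S, x e = 0) ∧
      ∀ w, ∑ e, x e * incid th hd e w = (if v = w then 1 else 0) - (if u = w then 1 else 0) := by
  induction h with
  | rel _ _ hab =>
    obtain ⟨e, heS, ⟨rfl, rfl⟩ | ⟨rfl, rfl⟩⟩ := hab
    · refine ⟨Pi.single e 1, fun e' he' => ?_, fun w => ?_⟩
      · exact Pi.single_eq_of_ne (ne_of_mem_of_not_mem heS he').symm 1
      · simp [Pi.single_apply, ite_mul, incid]
    · refine ⟨-Pi.single e 1, fun e' he' => ?_, fun w => ?_⟩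
      · simp [Pi.single_eq_of_ne (ne_of_mem_of_not_mem heS he').symm]
      · simp [Pi.single_apply, ite_mul, incid]
  | refl _ => exact ⟨0, fun _ _ => rfl, fun w => by simp⟩
  | symm _ _ _ ih =>
    obtain ⟨x, hxS, hx⟩ := ih
    refine ⟨-x, fun e he => by simp [hxS e he], fun w => ?_⟩
    simp only [Pi.neg_apply, neg_mul, Finset.sum_neg_distrib, hx w, neg_sub]
  | trans _ _ _ _ _ ihab ihbc =>
    obtain ⟨x, hxS, hx⟩ := ihab
    obtain ⟨y, hyS, hy⟩ := ihbc
    refine ⟨x + y, fun e he => by simp [hxS e he, hyS e he], fun w => ?_⟩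
    simp only [Pi.add_apply, add_mul, Finset.sum_add_distrib, hx w, hy w]
    ring

theorem exists_isCycle_insert_of_eqvGen [DecidableEq E] {S : Finset E} {e₀ : E} (he₀ : e₀ ∉ S)
    (h : Relation.EqvGen (adjS th hd S) (th e₀) (hd e₀)) :
    ∃ x₀ : E → ℤ, IsCycle th hd (insert e₀ S) x₀ ∧ x₀ e₀ = 1 := by
  obtain ⟨x, hxS, hx⟩ := exists_chain_of_eqvGen th hd h.symm
  refine ⟨x + Pi.single e₀ 1, ⟨fun e he => ?_, fun w => ?_⟩, by simp [hxS e₀ he₀]⟩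
  · rw [Finset.mem_insert, not_or] at he
    simp [hxS e he.2, he.1]
  · simp only [Pi.add_apply, add_mul, Finset.sum_add_distrib, hx w]
    simp [Pi.single_apply, ite_mul, incid]

theorem cycleSpan_le_cycleSpan_erase_sup [DecidableEq E] {T : Finset E} {x₀ : E → ℤ} {e₀ : E}
    (hx₀ : IsCycle th hd T x₀) (he₀ : x₀ e₀ = 1) :
    cycleSpan th hd γ T ≤ cycleSpan th hd γ (T.erase e₀) ⊔ ℚ ∙ q2 (rho γ x₀) := by
  rw [cycleSpan, Submodule.span_le]
  rintro _ ⟨_, ⟨y, hy, rfl⟩, rfl⟩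
  have hy' : IsCycle th hd (T.erase e₀) (y - y e₀ • x₀) :=
    (hy.sub_smul th hd hx₀ (y e₀)).erase th hd (by simp [he₀])
  have hsplit : q2 (rho γ y) = q2 (rho γ (y - y e₀ • x₀)) + (y e₀ : ℚ) • q2 (rho γ x₀) := by
    rw [q2_rho_sub_smul, sub_add_cancel]
  rw [SetLike.mem_coe, hsplit]
  exact Submodule.add_mem_sup (q2_rho_mem_cycleSpan th hd γ hy')
    (Submodule.smul_mem _ _ (Submodule.mem_span_singleton_self _))

theorem q2_rho_not_mem_cycleSpan_erase [DecidableEq E] {x₀ : E → ℤ} {e₀ : E}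
    (hx₀ : IsCycle th hd Finset.univ x₀) (he₀ : x₀ e₀ = 1)
    (hrk : zrank th hd γ (Finset.univ.erase e₀) < zrank th hd γ Finset.univ) :
    q2 (rho γ x₀) ∉ cycleSpan th hd γ (Finset.univ.erase e₀) := by
  intro hmem
  have hle := cycleSpan_le_cycleSpan_erase_sup th hd γ hx₀ he₀
  rw [sup_eq_left.2 ((Submodule.span_singleton_le_iff_mem _ _).2 hmem)] at hle
  exact (Submodule.finrank_mono hle).not_gt hrk

end CycleSpan

theorem statement2_general {V E : Type} [DecidableEq V] [Fintype E] [DecidableEq E]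
    (th hd : E → V) (γ : E → ℤ × ℤ) (e₀ : E) (S : Finset E) (heS : e₀ ∉ S)
    (hrk : zrank th hd γ (Finset.univ.erase e₀) < zrank th hd γ Finset.univ)
    (hcomp : Relation.EqvGen (adjS th hd S) (th e₀) (hd e₀)) :
    zrank th hd γ S < zrank th hd γ (insert e₀ S) := by
  obtain ⟨x₀, hx₀, hx₀e₀⟩ := exists_isCycle_insert_of_eqvGen th hd heS hcomp
  have hS : S ⊆ Finset.univ.erase e₀ := fun e he =>
    Finset.mem_erase.2 ⟨ne_of_mem_of_not_mem he heS, Finset.mem_univ e⟩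
  have hnew : q2 (rho γ x₀) ∉ cycleSpan th hd γ S := fun hmem =>
    q2_rho_not_mem_cycleSpan_erase th hd γ (hx₀.mono th hd (Finset.subset_univ _)) hx₀e₀ hrk
      (cycleSpan_mono th hd γ hS hmem)
  have hlt : cycleSpan th hd γ S < cycleSpan th hd γ (insert e₀ S) :=
    SetLike.lt_iff_le_and_exists.2 ⟨cycleSpan_mono th hd γ (Finset.subset_insert e₀ S),
      _, q2_rho_mem_cycleSpan th hd γ hx₀, hnew⟩
  exact Submodule.finrank_lt_finrank_of_lt hlt

/-- If adding the colored edge `e₀` to `G` strictly increases the ℤ²-rank, and the endpoints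
of `e₀` lie in a single connected component of the subgraph `S`, then adding `e₀` to `S`
strictly increases its ℤ²-rank. -/
theorem statement2 {V E : Type} [Fintype V] [DecidableEq V] [Fintype E] [DecidableEq E]
    (th hd : E → V) (γ : E → ℤ × ℤ) (e₀ : E) (S : Finset E) (heS : e₀ ∉ S)
    (hrk : zrank th hd γ (Finset.univ.erase e₀) < zrank th hd γ Finset.univ)
    (ht : th e₀ ∈ verts th hd S) (hh : hd e₀ ∈ verts th hd S)
    (hcomp : Relation.EqvGen (adjS th hd S) (th e₀) (hd e₀)) :
    zrank th hd γ S < zrank th hd γ (insert e₀ S) :=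
  statement2_general th hd γ e₀ S heS hrk hcomp
end

section
/- The family of (1,1,k)-colored subgraphs of (K_n^{6,4},γ), where k is the Z²-rank of the whole colored ground set, forms the set of bases of a matroid on the edge set; equivalently, f(G') = n' + rk_{Z²}(G') − c' is a nonnegative, monotone, submodular function whose induced matroid (via Edmonds–Rota) has the (1,1,k)-graphs as bases. -/
open Finset

open Module Submodule Relation

/-!
`fZ S` is the rank of the vectors `(∂e, γ e) ∈ ℚ^V × ℚ²`, `e ∈ S`, where `∂e` is the signed
incidence vector of `e`. The rank of such a family splits as the rank of the `∂e` plus the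
dimension of the colours of the rational cycles on `S`. The first summand is `n' - c'`: the kernel
of the incidence matrix on the spanned vertices consists of the functions constant on components.
The second is the ℤ²-rank, because clearing denominators turns rational cycles into integral ones.
So `fZ` is the rank function of a linear matroid: nonnegative, monotone and submodular, with `S`
independent iff `fZ S = |S|`. A basis is an independent `S` with `fZ S = fZ E = n - 1 + k`; as
`n' - c' ≤ n - 1`, with equality exactly for connected spanning subgraphs, and `rk_{ℤ²} S ≤ k`,
these are the `(1,1,k)`-graphs.
-/

section LinRank

variable {K M E : Type*} [Field K] [AddCommGroup M] [Module K M]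

variable (K) in
noncomputable def linRank (v : E → M) (S : Finset E) : ℕ :=
  finrank K (span K (v '' S))

variable (v : E → M)

theorem linRank_mono [FiniteDimensional K M] {S T : Finset E} (h : S ⊆ T) :
    linRank K v S ≤ linRank K v T :=
  Submodule.finrank_mono (span_mono (Set.image_mono (Finset.coe_subset.2 h)))

theorem linRank_le_card (S : Finset E) : linRank K v S ≤ S.card := by
  classical
  rw [linRank, ← Finset.coe_image]
  exact (finrank_span_finset_le_card _).trans Finset.card_image_le

theorem linRank_union_add_inter_le [FiniteDimensional K M] [DecidableEq E] (S T : Finset E) :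
    linRank K v (S ∪ T) + linRank K v (S ∩ T) ≤ linRank K v S + linRank K v T := by
  have hinter : linRank K v (S ∩ T) ≤
      finrank K ↥(span K (v '' S) ⊓ span K (v '' T)) :=
    Submodule.finrank_mono (le_inf (span_mono (Set.image_mono (by simp)))
      (span_mono (Set.image_mono (by simp))))
  have hunion : linRank K v (S ∪ T) = finrank K ↥(span K (v '' S) ⊔ span K (v '' T)) := by
    rw [linRank, Finset.coe_union, Set.image_union, span_union]
  have := Submodule.finrank_sup_add_finrank_inf_eq (span K (v '' S)) (span K (v '' T))
  unfold linRank at *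
  omega

theorem forall_subset_card_le_linRank_iff [FiniteDimensional K M] [DecidableEq E] (S : Finset E) :
    (∀ S' ⊆ S, S'.card ≤ linRank K v S') ↔ S.card ≤ linRank K v S := by
  refine ⟨fun h => h S subset_rfl, fun h S' hS' => ?_⟩
  have hsub := linRank_union_add_inter_le (K := K) v S' (S \ S')
  rw [Finset.union_sdiff_of_subset hS', Finset.inter_sdiff_self] at hsub
  have hcard := Finset.card_sdiff_add_card_eq_card hS'
  have := linRank_le_card (K := K) v (S \ S')
  omega

end LinRank

section Chains

variable {K U M N E : Type*} [Field K] [AddCommGroup U] [Module K U] [AddCommGroup M] [Module K M]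
  [AddCommGroup N] [Module K N]

theorem finrank_map_add_finrank_inf_ker [FiniteDimensional K U] (f : U →ₗ[K] M)
    (P : Submodule K U) :
    finrank K (map f P) + finrank K ↥(P ⊓ LinearMap.ker f) = finrank K P := by
  rw [← LinearMap.range_domRestrict, ← (f.domRestrict P).finrank_range_add_finrank_ker,
    LinearMap.ker_domRestrict,
    ← (comapSubtypeEquivOfLe (inf_le_left (b := LinearMap.ker f))).finrank_eq, comap_inf,
    comap_subtype_self, top_inf_eq]

theorem finrank_map_prod [FiniteDimensional K U] (B : U →ₗ[K] M) (R : U →ₗ[K] N)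
    (W : Submodule K U) :
    finrank K (map (B.prod R) W) =
      finrank K (map B W) + finrank K (map R (W ⊓ LinearMap.ker B)) := by
  have hBR := finrank_map_add_finrank_inf_ker (B.prod R) W
  have hB := finrank_map_add_finrank_inf_ker B W
  have hR := finrank_map_add_finrank_inf_ker R (W ⊓ LinearMap.ker B)
  rw [LinearMap.ker_prod, ← inf_assoc] at hBR
  omega

variable (K) in
def chainsOn (S : Finset E) : Submodule K (E → K) := Submodule.pi (↑S)ᶜ fun _ => ⊥

theorem map_linearCombination_chainsOn [Fintype E] (v : E → M) (S : Finset E) :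
    map (Fintype.linearCombination K v) (chainsOn K S) = span K (v '' S) := by
  classical
  apply le_antisymm
  · rintro _ ⟨x, hx, rfl⟩
    rw [Fintype.linearCombination_apply, ← Finset.sum_subset (Finset.subset_univ S)]
    · exact sum_mem fun e he => smul_mem _ _ (subset_span ⟨e, he, rfl⟩)
    · intro e _ he
      simp [show x e = 0 from hx e he]
  · rw [span_le]
    rintro _ ⟨e, he, rfl⟩
    refine ⟨Pi.single e 1, fun e' he' => ?_, by simp⟩
    exact (mem_bot K).2 (Pi.single_eq_of_ne (fun h : e' = e => he' (h ▸ he)) 1)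

end Chains

section FunctionsOnQuotient

variable {K ι : Type*} [Field K]

theorem mem_range_funLeft_quotient_mk_iff (r : ι → ι → Prop) (g : ι → K) :
    g ∈ LinearMap.range (LinearMap.funLeft K K (Quotient.mk (EqvGen.setoid r))) ↔
      ∀ a b, r a b → g a = g b := by
  constructor
  · rintro ⟨h, rfl⟩ a b hab
    exact congrArg h (Quotient.sound (EqvGen.rel a b hab))
  · intro hg
    have hequiv : Equivalence fun a b => g a = g b := ⟨fun _ => rfl, Eq.symm, Eq.trans⟩
    refine ⟨Quotient.lift g fun a b hab => ?_, rfl⟩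
    exact hequiv.eqvGen_iff.1 (EqvGen.mono hg _ _ hab)

theorem finrank_range_funLeft_quotient_mk [Finite ι] (s : Setoid ι) :
    finrank K (LinearMap.range (LinearMap.funLeft K K (Quotient.mk s))) =
      Nat.card (Quotient s) := by
  have := Fintype.ofFinite (Quotient s)
  rw [LinearMap.finrank_range_of_inj
    (LinearMap.funLeft_injective_of_surjective _ _ _ Quotient.mk_surjective),
    Module.finrank_fintype_fun_eq_card, Nat.card_eq_fintype_card]

end FunctionsOnQuotient

theorem exists_intCast_eq_smul {E : Type*} [Finite E] (y : E → ℚ) :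
    ∃ d : ℤ, d ≠ 0 ∧ ∃ x : E → ℤ, (fun e => (x e : ℚ)) = (d : ℚ) • y := by
  obtain ⟨⟨d, hd⟩, hy⟩ := IsLocalization.exist_integer_multiples_of_finite (nonZeroDivisors ℤ) y
  choose x hx using hy
  refine ⟨d, nonZeroDivisors.ne_zero hd, x, funext fun e => ?_⟩
  simpa using hx e

section Components

variable {V E : Type} {th hd : E → V} {S : Finset E}

theorem adjS.symm {u v : V} (h : adjS th hd S u v) : adjS th hd S v u := by
  obtain ⟨e, he, h⟩ := h
  exact ⟨e, he, h.symm⟩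

variable [DecidableEq V]

def vertsAdj (th hd : E → V) (S : Finset E) (a b : {v : V // v ∈ verts th hd S}) : Prop :=
  adjS th hd S a.1 b.1

theorem ncomp_eq_natCard :
    ncomp th hd S = Nat.card (Quotient (EqvGen.setoid (vertsAdj th hd S))) := rfl

theorem th_mem_verts {e : E} (he : e ∈ S) : th e ∈ verts th hd S :=
  Finset.mem_union_left _ (Finset.mem_image_of_mem _ he)

theorem hd_mem_verts {e : E} (he : e ∈ S) : hd e ∈ verts th hd S :=
  Finset.mem_union_right _ (Finset.mem_image_of_mem _ he)

theorem adjS.mem_verts {u v : V} (h : adjS th hd S u v) : u ∈ verts th hd S := by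
  obtain ⟨e, he, ⟨rfl, -⟩ | ⟨-, rfl⟩⟩ := h
  exacts [th_mem_verts he, hd_mem_verts he]

theorem eqvGen_adjS_of_eqvGen_vertsAdj {a b : {v : V // v ∈ verts th hd S}}
    (h : EqvGen (vertsAdj th hd S) a b) : EqvGen (adjS th hd S) a.1 b.1 := by
  induction h with
  | rel _ _ h => exact .rel _ _ h
  | refl => exact .refl _
  | symm _ _ _ ih => exact ih.symm
  | trans _ _ _ _ _ ih₁ ih₂ => exact ih₁.trans _ _ _ ih₂

theorem eq_or_eqvGen_vertsAdj_of_eqvGen_adjS {u v : V} (h : EqvGen (adjS th hd S) u v) :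
    u = v ∨ ∃ (hu : u ∈ verts th hd S) (hv : v ∈ verts th hd S),
      EqvGen (vertsAdj th hd S) ⟨u, hu⟩ ⟨v, hv⟩ := by
  induction h with
  | rel _ _ h => exact .inr ⟨h.mem_verts, h.symm.mem_verts, .rel _ _ h⟩
  | refl => exact .inl rfl
  | symm _ _ _ ih =>
    obtain rfl | ⟨hx, hy, ih⟩ := ih
    · exact .inl rfl
    · exact .inr ⟨hy, hx, ih.symm⟩
  | trans _ _ _ _ _ ih₁ ih₂ =>
    obtain h | ⟨hx, hy, ih₁⟩ := ih₁
    · exact h ▸ ih₂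
    obtain rfl | ⟨_, hz, ih₂⟩ := ih₂
    exacts [.inr ⟨hx, hy, ih₁⟩, .inr ⟨hx, hz, ih₁.trans _ _ _ ih₂⟩]

theorem mem_verts_of_conn (hS : Conn th hd S) {u v : V} (huv : u ≠ v) : u ∈ verts th hd S := by
  obtain h | ⟨hu, -⟩ := eq_or_eqvGen_vertsAdj_of_eqvGen_adjS (hS u v)
  exacts [absurd h huv, hu]

theorem ncomp_le_card_verts : ncomp th hd S ≤ (verts th hd S).card := by
  rw [ncomp_eq_natCard, ← Fintype.card_coe, ← Nat.card_eq_fintype_card]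
  exact Nat.card_le_card_of_surjective _ Quotient.mk_surjective

theorem ncomp_pos (h : (verts th hd S).Nonempty) : 0 < ncomp th hd S := by
  obtain ⟨v, hv⟩ := h
  rw [ncomp_eq_natCard]
  have : Nonempty (Quotient (EqvGen.setoid (vertsAdj th hd S))) := ⟨Quotient.mk _ ⟨v, hv⟩⟩
  exact Finite.card_pos

theorem ncomp_le_one_of_conn (hS : Conn th hd S) : ncomp th hd S ≤ 1 := by
  rw [ncomp_eq_natCard, Finite.card_le_one_iff_subsingleton]
  refine ⟨Quotient.ind₂ fun a b => Quotient.sound ?_⟩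
  obtain h | ⟨_, _, h⟩ := eq_or_eqvGen_vertsAdj_of_eqvGen_adjS (hS a.1 b.1)
  · exact Subtype.ext h ▸ EqvGen.refl a
  · exact h

variable [Fintype V]

theorem conn_of_ncomp_le_one (hV : verts th hd S = Finset.univ) (h : ncomp th hd S ≤ 1) :
    Conn th hd S := by
  intro u v
  have hu : u ∈ verts th hd S := hV ▸ Finset.mem_univ u
  have hv : v ∈ verts th hd S := hV ▸ Finset.mem_univ v
  rw [ncomp_eq_natCard, Finite.card_le_one_iff_subsingleton] at h
  exact eqvGen_adjS_of_eqvGen_vertsAdj (Quotient.exact (Subsingleton.elim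
    (Quotient.mk (EqvGen.setoid (vertsAdj th hd S)) ⟨u, hu⟩) (Quotient.mk _ ⟨v, hv⟩)))

theorem card_verts_le_ncomp_add :
    (verts th hd S).card ≤ ncomp th hd S + (Fintype.card V - 1) := by
  rcases (verts th hd S).eq_empty_or_nonempty with h | h
  · simp [h]
  · have := ncomp_pos h
    have := (verts th hd S).card_le_univ
    omega

theorem conn_iff_card_verts_eq :
    Conn th hd S ↔ (verts th hd S).card = ncomp th hd S + (Fintype.card V - 1) := by
  have hle := ncomp_le_card_verts (th := th) (hd := hd) (S := S)
  rcases (verts th hd S).eq_empty_or_nonempty with h | ⟨w, hw⟩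
  · rw [h, Finset.card_empty] at hle ⊢
    rw [Nat.le_zero.1 hle, zero_add, eq_comm, Nat.sub_eq_zero_iff_le,
      Fintype.card_le_one_iff_subsingleton]
    refine ⟨fun hS => ⟨fun u v => by_contra fun huv => ?_⟩,
      fun _ u v => Subsingleton.elim u v ▸ .refl _⟩
    simpa [h] using mem_verts_of_conn hS huv
  constructor
  · intro hS
    have hV : verts th hd S = Finset.univ := Finset.eq_univ_of_forall fun u =>
      if huw : u = w then huw ▸ hw else mem_verts_of_conn hS huw
    have := ncomp_pos ⟨w, hw⟩
    have := ncomp_le_one_of_conn hS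
    have := Fintype.card_pos_iff.2 ⟨w⟩
    rw [hV, Finset.card_univ]
    omega
  · intro hcard
    have := ncomp_pos ⟨w, hw⟩
    have := (verts th hd S).card_le_univ
    exact conn_of_ncomp_le_one (Finset.eq_univ_of_card _ (by omega)) (by omega)

end Components

section GraphicRank

variable {V E : Type} [DecidableEq V] {th hd : E → V} {S : Finset E}

theorem incid_eq_zero_of_notMem_verts {e : E} (he : e ∈ S) {v : V} (hv : v ∉ verts th hd S) :
    incid th hd e v = 0 := by
  rw [incid, if_neg fun h : hd e = v => hv (h ▸ hd_mem_verts he),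
    if_neg fun h : th e = v => hv (h ▸ th_mem_verts he), sub_zero]

def incVec (th hd : E → V) (e : E) : V → ℚ := fun v => incid th hd e v

def vertsIncMatrix (th hd : E → V) (S : Finset E) : Matrix S (verts th hd S) ℚ :=
  Matrix.of fun e v => incid th hd e v

theorem vertsIncMatrix_mulVec_apply (g : verts th hd S → ℚ) (e : S) :
    (vertsIncMatrix th hd S).mulVec g e =
      g ⟨hd e, hd_mem_verts e.2⟩ - g ⟨th e, th_mem_verts e.2⟩ := by
  have hsum (w : V) (hw : w ∈ verts th hd S) :
      ∑ x : verts th hd S, ((if w = x.1 then 1 else 0 : ℤ) : ℚ) * g x = g ⟨w, hw⟩ := by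
    rw [Fintype.sum_eq_single ⟨w, hw⟩ fun x hx => by
      rw [if_neg fun h => hx (Subtype.ext h.symm)]; simp]
    simp
  simp only [Matrix.mulVec, dotProduct, vertsIncMatrix, Matrix.of_apply, incid, Int.cast_sub,
    sub_mul, Finset.sum_sub_distrib]
  rw [hsum _ (hd_mem_verts e.2), hsum _ (th_mem_verts e.2)]

theorem ker_vertsIncMatrix_mulVecLin :
    LinearMap.ker (vertsIncMatrix th hd S).mulVecLin =
      LinearMap.range
        (LinearMap.funLeft ℚ ℚ (Quotient.mk (EqvGen.setoid (vertsAdj th hd S)))) := by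
  ext g
  rw [mem_range_funLeft_quotient_mk_iff, LinearMap.mem_ker, funext_iff]
  simp only [Matrix.mulVecLin_apply, vertsIncMatrix_mulVec_apply, Pi.zero_apply, sub_eq_zero]
  constructor
  · rintro h ⟨a, ha⟩ ⟨b, hb⟩ ⟨e, he, ⟨rfl, rfl⟩ | ⟨rfl, rfl⟩⟩
    exacts [(h ⟨e, he⟩).symm, h ⟨e, he⟩]
  · exact fun h e => h _ _ ⟨e, e.2, .inr ⟨rfl, rfl⟩⟩

theorem rank_vertsIncMatrix_add_ncomp :
    (vertsIncMatrix th hd S).rank + ncomp th hd S = (verts th hd S).card := by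
  rw [Matrix.rank, ncomp_eq_natCard, ← finrank_range_funLeft_quotient_mk (K := ℚ),
    ← ker_vertsIncMatrix_mulVecLin, LinearMap.finrank_range_add_finrank_ker,
    Module.finrank_fintype_fun_eq_card, Fintype.card_coe]

theorem finrank_span_incVec_eq_rank [Fintype V] :
    finrank ℚ (span ℚ (incVec th hd '' S)) = (vertsIncMatrix th hd S).rank := by
  -- row rank is column rank, and the columns outside `verts th hd S` vanish
  let N : Matrix S V ℚ := Matrix.of fun e => incVec th hd e
  have hrow : Set.range N.row = incVec th hd '' S := by
    rw [Set.image_eq_range]; rfl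
  have hN : N.mulVecLin = (vertsIncMatrix th hd S).mulVecLin ∘ₗ
      LinearMap.funLeft ℚ ℚ (Subtype.val : verts th hd S → V) := by
    refine LinearMap.ext fun g => funext fun e => ?_
    simp only [LinearMap.comp_apply, Matrix.mulVecLin_apply, Matrix.mulVec, dotProduct, N,
      vertsIncMatrix, incVec, Matrix.of_apply, LinearMap.funLeft_apply]
    rw [Finset.sum_coe_sort (verts th hd S) fun v => (incid th hd e v : ℚ) * g v]
    refine (Finset.sum_subset (Finset.subset_univ _) fun v _ hv => ?_).symm
    rw [incid_eq_zero_of_notMem_verts e.2 hv, Int.cast_zero, zero_mul]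
  rw [← hrow, ← N.rank_eq_finrank_span_row, Matrix.rank, Matrix.rank, hN,
    LinearMap.range_comp_of_range_eq_top _ (LinearMap.range_eq_top.2
      (LinearMap.funLeft_surjective_of_injective _ _ _ Subtype.val_injective))]

theorem finrank_span_incVec_add_ncomp [Fintype V] :
    finrank ℚ (span ℚ (incVec th hd '' S)) + ncomp th hd S = (verts th hd S).card := by
  rw [finrank_span_incVec_eq_rank, rank_vertsIncMatrix_add_ncomp]

end GraphicRank

section ColoredRank

variable {V E : Type} [DecidableEq V] [Fintype E] {th hd : E → V} {γ : E → ℤ × ℤ}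
  {S : Finset E}

def boundary (th hd : E → V) : (E → ℚ) →ₗ[ℚ] (V → ℚ) :=
  Fintype.linearCombination ℚ (incVec th hd)

def colorSum (γ : E → ℤ × ℤ) : (E → ℚ) →ₗ[ℚ] ℚ × ℚ := Fintype.linearCombination ℚ (q2 ∘ γ)

theorem isCycle_iff_intCast_mem (x : E → ℤ) :
    IsCycle th hd S x ↔
      (fun e => (x e : ℚ)) ∈ chainsOn ℚ S ⊓ LinearMap.ker (boundary th hd) := by
  rw [IsCycle, Submodule.mem_inf, LinearMap.mem_ker, funext_iff]
  refine and_congr (forall₂_congr fun e _ => by simp) (forall_congr' fun v => ?_)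
  simp only [boundary, Fintype.linearCombination_apply, Finset.sum_apply, Pi.smul_apply, incVec,
    smul_eq_mul, Pi.zero_apply]
  exact_mod_cast Iff.rfl

theorem q2_rho (x : E → ℤ) : q2 (rho γ x) = colorSum γ (fun e => (x e : ℚ)) := by
  refine Prod.ext ?_ ?_ <;>
    simp [q2, rho, colorSum, Fintype.linearCombination_apply, Prod.fst_sum, Prod.snd_sum]

theorem span_q2_rho_isCycle :
    span ℚ (q2 '' (rho γ '' {x | IsCycle th hd S x})) =
      map (colorSum γ) (chainsOn ℚ S ⊓ LinearMap.ker (boundary th hd)) := by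
  apply le_antisymm
  · rw [span_le]
    rintro _ ⟨_, ⟨x, hx, rfl⟩, rfl⟩
    exact ⟨_, (isCycle_iff_intCast_mem x).1 hx, (q2_rho x).symm⟩
  · rintro _ ⟨y, hy, rfl⟩
    obtain ⟨d, hd0, x, hx⟩ := exists_intCast_eq_smul y
    have hcycle : IsCycle th hd S x := (isCycle_iff_intCast_mem x).2 (hx ▸ smul_mem _ _ hy)
    have hy' : colorSum γ y = (d : ℚ)⁻¹ • q2 (rho γ x) := by
      rw [q2_rho, hx, map_smul, inv_smul_smul₀ (Int.cast_ne_zero.2 hd0)]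
    rw [hy']
    exact smul_mem _ _ (subset_span ⟨_, ⟨x, hcycle, rfl⟩, rfl⟩)

theorem zrank_mono {T : Finset E} (h : S ⊆ T) : zrank th hd γ S ≤ zrank th hd γ T :=
  Submodule.finrank_mono (span_mono (Set.image_mono (Set.image_mono
    fun _ hx => ⟨fun e he => hx.1 e (mt (@h e) he), hx.2⟩)))

def coloredIncVec (th hd : E → V) (γ : E → ℤ × ℤ) (e : E) : (V → ℚ) × (ℚ × ℚ) :=
  (incVec th hd e, q2 (γ e))

theorem linearCombination_coloredIncVec :
    Fintype.linearCombination ℚ (coloredIncVec th hd γ) = (boundary th hd).prod (colorSum γ) := by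
  refine LinearMap.ext fun x => Prod.ext ?_ ?_ <;>
    simp [coloredIncVec, boundary, colorSum, Fintype.linearCombination_apply, Prod.fst_sum,
      Prod.snd_sum]

theorem linRank_coloredIncVec [Fintype V] (S : Finset E) :
    linRank ℚ (coloredIncVec th hd γ) S =
      finrank ℚ (span ℚ (incVec th hd '' S)) + zrank th hd γ S := by
  rw [linRank, ← map_linearCombination_chainsOn, linearCombination_coloredIncVec,
    finrank_map_prod, boundary, map_linearCombination_chainsOn, ← boundary, ← span_q2_rho_isCycle,
    zrank]

theorem fZ_eq_linRank [Fintype V] (S : Finset E) :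
    fZ th hd γ S = linRank ℚ (coloredIncVec th hd γ) S := by
  have := finrank_span_incVec_add_ncomp (th := th) (hd := hd) (S := S)
  rw [fZ, linRank_coloredIncVec]
  omega

theorem fZ_eq_card_sub_one_add_zrank_univ_iff [Fintype V] (S : Finset E) :
    fZ th hd γ S = ((Fintype.card V - 1 : ℕ) : ℤ) + zrank th hd γ Finset.univ ↔
      Conn th hd S ∧ zrank th hd γ S = zrank th hd γ Finset.univ := by
  have hverts := card_verts_le_ncomp_add (th := th) (hd := hd) (S := S)
  have hz := zrank_mono (th := th) (hd := hd) (γ := γ) (Finset.subset_univ S)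
  rw [fZ, conn_iff_card_verts_eq]
  omega

end ColoredRank

theorem conn_Kt_Kh_univ (n : ℕ) : Conn (Kt n) (Kh n) Finset.univ := by
  intro u v
  rcases lt_trichotomy u v with huv | rfl | hvu
  · exact .rel _ _ ⟨.inl ⟨⟨(u, v), huv⟩, 0⟩, Finset.mem_univ _, .inl ⟨rfl, rfl⟩⟩
  · exact .refl _
  · exact .rel _ _ ⟨.inl ⟨⟨(v, u), hvu⟩, 0⟩, Finset.mem_univ _, .inr ⟨rfl, rfl⟩⟩

/-- `f(G') = n' + rk_{ℤ²}(G') − c'` on edge-subsets of `K_n^{6,4}` is nonnegative, monotone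
and submodular, and the bases of the matroid it induces (via the Edmonds–Rota construction)
are exactly the `(1,1,k)`-graphs, where `k` is the ℤ²-rank of the whole colored ground set. -/
theorem statement8 (n k : ℕ) (hn : 1 ≤ n) (γ : KE n → ℤ × ℤ)
    (hk : zrank (Kt n) (Kh n) γ Finset.univ = k) :
    (∀ S : Finset (KE n), 0 ≤ fZ (Kt n) (Kh n) γ S) ∧
    (∀ S T : Finset (KE n), S ⊆ T → fZ (Kt n) (Kh n) γ S ≤ fZ (Kt n) (Kh n) γ T) ∧
    (∀ S T : Finset (KE n),
      fZ (Kt n) (Kh n) γ (S ∪ T) + fZ (Kt n) (Kh n) γ (S ∩ T) ≤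
        fZ (Kt n) (Kh n) γ S + fZ (Kt n) (Kh n) γ T) ∧
    (∀ S : Finset (KE n),
      (fZ (Kt n) (Kh n) γ S = fZ (Kt n) (Kh n) γ Finset.univ ∧
        ∀ S' ⊆ S, (S'.card : ℤ) ≤ fZ (Kt n) (Kh n) γ S') ↔
      (Conn (Kt n) (Kh n) S ∧ (S.card : ℤ) = (n : ℤ) - 1 + k ∧
        zrank (Kt n) (Kh n) γ S = k)) := by
  have hf := fZ_eq_linRank (th := Kt n) (hd := Kh n) (γ := γ)
  have hbasis : ∀ S, fZ (Kt n) (Kh n) γ S = (n : ℤ) - 1 + k ↔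
      Conn (Kt n) (Kh n) S ∧ zrank (Kt n) (Kh n) γ S = k := by
    have hcard : ((Fintype.card (Fin n) - 1 : ℕ) : ℤ) + k = (n : ℤ) - 1 + k := by
      rw [Fintype.card_fin]; omega
    intro S
    rw [← hcard, ← hk]
    exact fZ_eq_card_sub_one_add_zrank_univ_iff S
  have huniv := (hbasis Finset.univ).2 ⟨conn_Kt_Kh_univ n, hk⟩
  refine ⟨fun S => hf S ▸ Nat.cast_nonneg _, fun S T h => ?_, fun S T => ?_, fun S => ?_⟩
  · rw [hf, hf]
    exact_mod_cast linRank_mono _ h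
  · simp only [hf]
    exact_mod_cast linRank_union_add_inter_le _ S T
  have hindep : (∀ S' ⊆ S, (S'.card : ℤ) ≤ fZ (Kt n) (Kh n) γ S') ↔
      (S.card : ℤ) ≤ fZ (Kt n) (Kh n) γ S := by
    simp only [hf, Nat.cast_le]
    exact forall_subset_card_le_linRank_iff _ S
  have hle : fZ (Kt n) (Kh n) γ S ≤ S.card := by
    rw [hf]
    exact_mod_cast linRank_le_card _ S
  rw [hindep, huniv]
  constructor
  · rintro ⟨hS, hcard⟩
    obtain ⟨hconn, hz⟩ := (hbasis S).1 hS
    exact ⟨hconn, by omega, hz⟩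
  · rintro ⟨hconn, hcard, hz⟩
    have hS := (hbasis S).2 ⟨hconn, hz⟩
    exact ⟨hS, by omega⟩
end

section
/- Let (G,γ) be a Z²-colored graph with n vertices and 2n+1 edges. Then (G,γ) is colored-Laman if and only if for every edge ij, the graph obtained by adding a parallel copy of ij with the same color is a (2,2,2)-colored graph. -/
/-!
Doubling the edge `e₀` is the pullback of the colored graph along the edge map
`E ⊕ Unit → E` that sends the new edge to `e₀`. Pulling back along any edge map `π` does not
change vertices, components or ℤ²-rank: an edge set `S` behaves exactly like its image
`π '' S`, because cycles push forward to cycles with the same color sum, and every cycle on the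
image lifts back along a section of `π` over `S`. An edge set of the doubled graph has at most
one edge more than its image, so the (2,2,2)-count follows from the Laman count of the image;
conversely, a nonempty edge set containing `e₀` together with the copy of `e₀` has one edge
more and the same `n'`, rank and `c'`, which turns the (2,2,2)-count back into the Laman count.
-/

open Finset

section Chains

variable {E E' : Type} [DecidableEq E] [Fintype E']

def pushChain (π : E' → E) (x : E' → ℤ) : E → ℤ := fun e => ∑ e' with π e' = e, x e'

lemma pushChain_apply_eq_zero {π : E' → E} {x : E' → ℤ} {e : E}
    (hx : ∀ e', π e' = e → x e' = 0) : pushChain π x e = 0 :=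
  Finset.sum_eq_zero fun e' he' => hx e' (Finset.mem_filter.1 he').2

lemma sum_pushChain_smul [Fintype E] {M : Type} [AddCommGroup M] (π : E' → E) (x : E' → ℤ)
    (f : E → M) : ∑ e, pushChain π x e • f e = ∑ e', x e' • f (π e') := by
  simp only [pushChain, Finset.sum_smul]
  rw [← Finset.sum_fiberwise Finset.univ π fun e' => x e' • f (π e')]
  refine Finset.sum_congr rfl fun e _ => Finset.sum_congr rfl fun e' he' => ?_
  rw [(Finset.mem_filter.1 he').2]

lemma pushChain_comp [Fintype E] [DecidableEq E'] (π : E' → E) (σ : E → E') (y : E → ℤ) :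
    pushChain π (pushChain σ y) = pushChain (π ∘ σ) y := by
  funext e
  simp only [pushChain, Function.comp_apply]
  rw [← Finset.sum_fiberwise _ σ, Finset.sum_filter]
  refine Finset.sum_congr rfl fun e' _ => ?_
  split_ifs with h
  · rw [Finset.filter_filter]
    exact Finset.sum_congr
      (Finset.filter_congr fun i _ => ⟨fun hi => ⟨hi ▸ h, hi⟩, And.right⟩) fun _ _ => rfl
  · refine (Finset.sum_eq_zero fun i hi => ?_).symm
    obtain ⟨hπ, hσ⟩ : π (σ i) = e ∧ σ i = e' := by simpa using hi
    exact absurd (hσ ▸ hπ) h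

lemma pushChain_eq_self [Fintype E] (f : E → E) (y : E → ℤ) (hf : ∀ e, y e ≠ 0 → f e = e) :
    pushChain f y = y := by
  funext e
  refine (Finset.sum_eq_single e (fun e' he' hne => ?_) fun he => ?_).trans rfl
  · by_contra h
    exact hne ((hf e' h).symm.trans (Finset.mem_filter.1 he').2)
  · by_contra h
    exact he (Finset.mem_filter.2 ⟨Finset.mem_univ _, hf e h⟩)

lemma exists_pushChain_eq [Fintype E] [DecidableEq E'] (π : E' → E) (S : Finset E')
    (y : E → ℤ) (hy : ∀ e ∉ S.image π, y e = 0) :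
    ∃ x : E' → ℤ, (∀ e' ∉ S, x e' = 0) ∧ pushChain π x = y := by
  cases isEmpty_or_nonempty E' with
  | inl _ =>
    refine ⟨isEmptyElim, fun e' => isEmptyElim e', funext fun e => ?_⟩
    rw [pushChain_apply_eq_zero fun e' => isEmptyElim e', hy e (by simp)]
  | inr _ =>
    -- push `y` forward along a section `σ` of `π` over `S`
    choose! σ hσS hσπ using fun e (he : e ∈ S.image π) => Finset.mem_image.1 he
    have hsupp : ∀ e, y e ≠ 0 → e ∈ S.image π := fun e => not_imp_comm.1 (hy e)
    refine ⟨pushChain σ y, fun e' he' => pushChain_apply_eq_zero fun e he => ?_, ?_⟩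
    · by_contra h
      exact he' (he ▸ hσS e (hsupp e h))
    · rw [pushChain_comp]
      exact pushChain_eq_self _ y fun e he => hσπ e (hsupp e he)

end Chains

section Pullback

variable {V E E' : Type} [DecidableEq E] [Fintype E'] (th hd : E → V) (γ : E → ℤ × ℤ)
  (π : E' → E)

lemma sum_mul_incid_comp [DecidableEq V] [Fintype E] (x : E' → ℤ) (v : V) :
    ∑ e', x e' * incid (th ∘ π) (hd ∘ π) e' v = ∑ e, pushChain π x e * incid th hd e v :=
  (sum_pushChain_smul π x fun e => incid th hd e v).symm

lemma rho_pushChain [Fintype E] (x : E' → ℤ) : rho γ (pushChain π x) = rho (γ ∘ π) x :=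
  sum_pushChain_smul π x γ

variable {th hd π} [DecidableEq V] [Fintype E]

lemma isCycle_pushChain {S : Finset E'} {x : E' → ℤ} (hx : IsCycle (th ∘ π) (hd ∘ π) S x) :
    IsCycle th hd (S.image π) (pushChain π x) :=
  ⟨fun _ he => pushChain_apply_eq_zero fun e' he' =>
      hx.1 e' fun hS => he (he' ▸ Finset.mem_image_of_mem π hS),
    fun v => (sum_mul_incid_comp th hd π x v).symm.trans (hx.2 v)⟩

lemma isCycle_comp_of_pushChain {S : Finset E'} {T : Finset E} {x : E' → ℤ}
    (hx : ∀ e' ∉ S, x e' = 0) (hy : IsCycle th hd T (pushChain π x)) :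
    IsCycle (th ∘ π) (hd ∘ π) S x :=
  ⟨hx, fun v => (sum_mul_incid_comp th hd π x v).trans (hy.2 v)⟩

variable (th hd π) [DecidableEq E']

lemma rho_image_isCycle_comp (S : Finset E') :
    rho (γ ∘ π) '' {x | IsCycle (th ∘ π) (hd ∘ π) S x}
      = rho γ '' {y | IsCycle th hd (S.image π) y} := by
  ext z
  constructor
  · rintro ⟨x, hx, rfl⟩
    exact ⟨pushChain π x, isCycle_pushChain hx, rho_pushChain γ π x⟩
  · rintro ⟨y, hy, rfl⟩
    obtain ⟨x, hxS, rfl⟩ := exists_pushChain_eq π S y hy.1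
    exact ⟨x, isCycle_comp_of_pushChain hxS hy, (rho_pushChain γ π x).symm⟩

lemma zrank_comp (S : Finset E') :
    zrank (th ∘ π) (hd ∘ π) (γ ∘ π) S = zrank th hd γ (S.image π) := by
  rw [zrank, rho_image_isCycle_comp, zrank]

end Pullback

section Pullback

variable {V E E' : Type} [DecidableEq E] (th hd : E → V) (π : E' → E) (S : Finset E')

lemma adjS_comp : adjS (th ∘ π) (hd ∘ π) S = adjS th hd (S.image π) := by
  ext u v
  simp [adjS]

variable [DecidableEq V]

lemma verts_comp : verts (th ∘ π) (hd ∘ π) S = verts th hd (S.image π) := by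
  simp only [verts, Finset.image_image]

lemma ncomp_comp : ncomp (th ∘ π) (hd ∘ π) S = ncomp th hd (S.image π) := by
  rw [ncomp, ncomp, verts_comp, adjS_comp]

end Pullback

lemma ncomp_empty {V E : Type} [DecidableEq V] (th hd : E → V) : ncomp th hd ∅ = 0 := by
  have : IsEmpty {v // v ∈ verts th hd ∅} := ⟨fun v => by simpa [verts] using v.2⟩
  exact Nat.card_of_isEmpty

section Doubling

variable {E : Type}

lemma elim_const_eq_comp {α : Type} (f : E → α) (e₀ : E) :
    Sum.elim f (fun _ : Unit => f e₀) = f ∘ Sum.elim id fun _ => e₀ :=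
  (Sum.comp_elim f id fun _ => e₀).symm

variable [DecidableEq E]

lemma card_le_card_image_doubling_add_one (e₀ : E) (S : Finset (E ⊕ Unit)) :
    S.card ≤ (S.image (Sum.elim id fun _ => e₀)).card + 1 := by
  calc S.card
      ≤ (insert (Sum.inr ())
          ((S.image (Sum.elim id fun _ => e₀)).map Function.Embedding.inl)).card := by
        refine Finset.card_le_card fun e he => ?_
        rcases e with e | ⟨⟩
        · exact Finset.mem_insert_of_mem (Finset.mem_map_of_mem _ (Finset.mem_image_of_mem _ he))
        · exact Finset.mem_insert_self _ _
    _ ≤ _ := (Finset.card_insert_le _ _).trans_eq (by rw [Finset.card_map])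

lemma image_doubling_insert_inr {e₀ : E} {S : Finset E} (he₀ : e₀ ∈ S) :
    (insert (Sum.inr ()) (S.map Function.Embedding.inl) : Finset (E ⊕ Unit)).image
      (Sum.elim id fun _ => e₀) = S := by
  have hinl : (Sum.elim id fun _ : Unit => e₀) ∘ Function.Embedding.inl = (id : E → E) := rfl
  rw [Finset.image_insert, Finset.map_eq_image, Finset.image_image, hinl, Finset.image_id]
  exact Finset.insert_eq_of_mem he₀

lemma card_insert_inr_map_inl (S : Finset E) :
    (insert (Sum.inr ()) (S.map Function.Embedding.inl) : Finset (E ⊕ Unit)).card = S.card + 1 := by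
  simp

end Doubling

/-- A colored graph with `n` vertices and `2n+1` edges is colored-Laman iff doubling any
edge (adding a parallel copy with the same color, modeled on the edge type `E ⊕ Unit`)
yields a `(2,2,2)`-colored graph. -/
theorem statement12 {V E : Type} [Fintype V] [DecidableEq V] [Fintype E] [DecidableEq E]
    (th hd : E → V) (γ : E → ℤ × ℤ)
    (hm : (Fintype.card E : ℤ) = 2 * Fintype.card V + 1) :
    (∀ S : Finset E, S.Nonempty →
      (S.card : ℤ) ≤ 2 * ((verts th hd S).card : ℤ) - 3 + 2 * (zrank th hd γ S : ℤ)
        - 2 * ((ncomp th hd S : ℤ) - 1)) ↔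
    (∀ e₀ : E,
      ((Fintype.card (E ⊕ Unit) : ℤ) = 2 * Fintype.card V + 2) ∧
      ∀ S : Finset (E ⊕ Unit),
        (S.card : ℤ) ≤
          2 * ((verts (Sum.elim th fun _ => th e₀) (Sum.elim hd fun _ => hd e₀) S).card : ℤ)
            - 2
            + 2 * (zrank (Sum.elim th fun _ => th e₀) (Sum.elim hd fun _ => hd e₀)
                (Sum.elim γ fun _ => γ e₀) S : ℤ)
            - 2 * ((ncomp (Sum.elim th fun _ => th e₀) (Sum.elim hd fun _ => hd e₀) S : ℤ) - 1)) := by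
  simp only [elim_const_eq_comp, verts_comp, zrank_comp, ncomp_comp]
  constructor
  · intro hLaman e₀
    refine ⟨by rw [Fintype.card_sum, Fintype.card_unit, Nat.cast_add, hm]; ring, fun S => ?_⟩
    rcases S.eq_empty_or_nonempty with rfl | hS
    · simp [verts, ncomp_empty]
    · have := hLaman _ (hS.image (Sum.elim id fun _ => e₀))
      have := card_le_card_image_doubling_add_one e₀ S
      omega
  · rintro hDoubled S ⟨e₀, he₀⟩
    have := (hDoubled e₀).2 (insert (Sum.inr ()) (S.map Function.Embedding.inl))
    rw [image_doubling_insert_inr he₀, card_insert_inr_map_inl] at this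
    omega
end

section
/- Let (G,γ) be a Z²-colored graph with n vertices and n edges whose Z²-rank is 1. Then (G,γ) is a (1,1,1)-graph (spanning tree plus one edge whose unique cycle C has ρ(C) = (t₁,t₂) ≠ (0,0)) if and only if the generic matrix M_{1,1,2}(G,γ) has rank n; moreover, the n×n minor obtained by keeping all vertex columns except one and the q-th extra column (q∈{1,2}) has determinant ± t_q ∏_{ij∈E} a_{ij}. -/
open Finset

open MvPolynomial in
/-- The entry of the generic matrix `M_{1,1,2}(G,γ)` in row `e` and a given column. -/
noncomputable def Ment {V E : Type} [Fintype V] [DecidableEq V] [Fintype E] [DecidableEq E]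
    (th hd : E → V) (γ : E → ℤ × ℤ) (e : E) : V ⊕ Fin 2 → MvPolynomial E ℚ
  | Sum.inl w => (if hd e = w then X e else 0) - (if th e = w then X e else 0)
  | Sum.inr q => (((if q = 0 then (γ e).1 else (γ e).2) : ℤ) : MvPolynomial E ℚ) * X e

/-!
Write `M_{1,1,2} = diag(a) · N`, where `N` is the integer matrix `[incidence | γ¹ | γ²]`. Neither
the factor `diag(a)`, of nonzero determinant, nor the extension of scalars from `ℚ` to `ℚ[a]`
changes whether the rank is `n`, so `M_{1,1,2}` has rank `n` iff `N` has full row rank over `ℚ`,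
i.e. iff no nonzero rational cycle has color-sum zero. The color-sums of cycles span a line
(ℤ²-rank 1), so this holds iff the cycle space has dimension at most one, which for `n` edges on
`n` vertices means that the graph is connected.

For the minors, expand along the color column: the determinant is `∑ e, γ^q_e c_e`, where the
cofactors `c_e` annihilate the remaining incidence columns and hence form an integer cycle. Total
unimodularity of the incidence matrix gives `c_e ∈ {0, ±1}`, and connectivity gives `c ≠ 0`. The
integer cycles of a connected graph with as many edges as vertices are the multiples of any cycle
with an entry `±1`, so `c = ±x` for one fixed such cycle `x`, and the minor is `± ρ_q(x) ∏ a_e`.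
-/

namespace Matrix

variable {m n ι R K : Type*}

theorem rank_map_le [Fintype m] [Fintype n] [Field K] [CommRing R] [StrongRankCondition R]
    (f : K →+* R) (A : Matrix m n K) : (A.map f).rank ≤ A.rank := by
  set W := Submodule.span K (Set.range A.col)
  let b := Module.finBasis K W
  have hcol : ∀ j, A.col j ∈ W := fun j => Submodule.subset_span ⟨j, rfl⟩
  -- factor `A` through a basis of its column space
  have hA : A = (of fun i k => (b k : m → K) i) * of fun k j => b.repr ⟨A.col j, hcol j⟩ k := by
    ext i j
    have := congrArg (fun x : W => (x : m → K) i) (b.sum_repr ⟨A.col j, hcol j⟩)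
    simp only [Submodule.coe_sum, Submodule.coe_smul, Finset.sum_apply, Pi.smul_apply,
      smul_eq_mul, col_apply] at this
    simp only [mul_apply, of_apply, ← this, mul_comm]
  calc (A.map f).rank ≤ ((of fun i k => (b k : m → K) i).map f).rank := by
        conv_lhs => rw [hA, Matrix.map_mul]
        exact rank_mul_le_left _ _
    _ ≤ _ := rank_le_card_width _
    _ = A.rank := by rw [Fintype.card_fin, rank_eq_finrank_span_cols]

theorem rank_map_eq_card_height_iff [Fintype m] [Fintype n] [DecidableEq m] [DecidableEq n]
    [Field K] [CommRing R] [Nontrivial R] (f : K →+* R) (A : Matrix m n K) :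
    (A.map f).rank = Fintype.card m ↔ A.rank = Fintype.card m := by
  refine ⟨fun h => le_antisymm A.rank_le_card_height (h ▸ rank_map_le f A), fun h => ?_⟩
  have hsurj : LinearMap.range A.mulVecLin = ⊤ :=
    Submodule.eq_top_of_finrank_eq (by rw [Module.finrank_pi]; exact h)
  obtain ⟨g, hg⟩ := A.mulVecLin.exists_rightInverse_of_surjective hsurj
  have hB : A * LinearMap.toMatrix' g = 1 := by
    rw [← LinearMap.toMatrix'_toLin' A, ← LinearMap.toMatrix'_comp, Matrix.toLin'_apply', hg,
      LinearMap.toMatrix'_id]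
  refine le_antisymm (rank_le_card_height _) ?_
  calc Fintype.card m = (A.map f * (LinearMap.toMatrix' g).map f).rank := by
        rw [← Matrix.map_mul, hB, Matrix.map_one f f.map_zero f.map_one, rank_one]
    _ ≤ (A.map f).rank := rank_mul_le_left _ _

/-- The square matrix whose columns are those of `A` together with `y`, ordered along `eqv`. -/
def adjoinCol (A : Matrix m ι R) (eqv : m ≃ ι ⊕ Unit) (y : m → R) : Matrix m m R :=
  (fromCols A (replicateCol Unit y)).submatrix id eqv

theorem adjoinCol_eq_updateCol [DecidableEq m] (A : Matrix m ι R) (eqv : m ≃ ι ⊕ Unit)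
    (y y' : m → R) :
    adjoinCol A eqv y = (adjoinCol A eqv y').updateCol (eqv.symm (Sum.inr ())) y := by
  ext i j
  rcases h : eqv j with w | u
  · have : j ≠ eqv.symm (Sum.inr ()) := by rintro rfl; simp at h
    simp [adjoinCol, this, h]
  · have : j = eqv.symm (Sum.inr ()) := by rw [← h, Equiv.symm_apply_apply]
    simp [adjoinCol, this]

theorem adjoinCol_map (A : Matrix m ι R) (eqv : m ≃ ι ⊕ Unit) (y : m → R) (f : R → K) :
    (adjoinCol A eqv y).map f = adjoinCol (A.map f) eqv (f ∘ y) := by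
  ext i j
  rcases h : eqv j with w | u <;> simp [adjoinCol, h]

variable [Fintype m] [DecidableEq m]

theorem det_adjoinCol [CommRing R] (A : Matrix m ι R) (eqv : m ≃ ι ⊕ Unit) (y : m → R) :
    (adjoinCol A eqv y).det = ∑ i, y i * (adjoinCol A eqv (Pi.single i 1)).det := by
  have hcramer : ∀ z, (adjoinCol A eqv z).det = (adjoinCol A eqv 0).cramer z (eqv.symm (.inr ())) :=
    fun z => by rw [cramer_apply, ← adjoinCol_eq_updateCol]
  simp only [hcramer, cramer_eq_adjugate_mulVec, mulVec_single_one, col_apply]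
  simp only [mulVec, dotProduct, mul_comm]

theorem det_adjoinCol_col [CommRing R] (A : Matrix m ι R) (eqv : m ≃ ι ⊕ Unit) (w : ι) :
    (adjoinCol A eqv fun i => A i w).det = 0 :=
  det_zero_of_column_eq (i := eqv.symm (.inl w)) (j := eqv.symm (.inr ())) (by simp)
    fun k => by simp [adjoinCol]

theorem exists_det_adjoinCol_ne_zero [Fintype ι] [Field K] (A : Matrix m ι K)
    (eqv : m ≃ ι ⊕ Unit) (hA : LinearIndependent K A.col) :
    ∃ y, (adjoinCol A eqv y).det ≠ 0 := by
  have hspan : Submodule.span K (Set.range A.col) ≠ ⊤ := by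
    intro htop
    have h := finrank_span_eq_card hA
    rw [htop, finrank_top, Module.finrank_pi, Fintype.card_congr eqv, Fintype.card_sum,
      Fintype.card_unit] at h
    omega
  obtain ⟨y, hy⟩ := SetLike.exists_not_mem_of_ne_top _ hspan rfl
  have hy0 : y ≠ 0 := by rintro rfl; exact hy (zero_mem _)
  refine ⟨y, ?_⟩
  rw [← isUnit_iff_ne_zero, ← isUnit_iff_isUnit_det, ← linearIndependent_cols_iff_isUnit]
  have hcols : (adjoinCol A eqv y).col = Sum.elim A.col (fun _ : Unit => y) ∘ eqv := by
    ext j i; rcases h : eqv j with w | u <;> simp [adjoinCol, h]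
  rw [hcols, linearIndependent_equiv]
  refine hA.sum_type (linearIndependent_unique_iff.mpr hy0) ?_
  rwa [Set.range_const, Submodule.disjoint_span_singleton' hy0]

theorem IsTotallyUnimodular.det_adjoinCol_single [CommRing R] {A : Matrix m ι R}
    (hA : A.IsTotallyUnimodular) (eqv : m ≃ ι ⊕ Unit) (i : m) :
    (adjoinCol A eqv (Pi.single i 1)).det ∈ Set.range SignType.cast := by
  have hTU : (fromCols A (replicateCol Unit (Pi.single i 1))).IsTotallyUnimodular := by
    rw [← transpose_isTotallyUnimodular_iff, transpose_fromCols, transpose_replicateCol]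
    exact hA.transpose.fromRows_unitlike fun _ _ => ⟨i, 1, by ext; simp⟩
  exact (isTotallyUnimodular_iff_fintype _).mp hTU m id eqv

end Matrix

theorem Submodule.disjoint_ker_iff_finrank_map_eq {K M N : Type*} [Field K] [AddCommGroup M]
    [Module K M] [FiniteDimensional K M] [AddCommGroup N] [Module K N] (p : Submodule K M)
    (f : M →ₗ[K] N) :
    Disjoint p (LinearMap.ker f) ↔ Module.finrank K (p.map f) = Module.finrank K p := by
  rw [← LinearMap.injective_domRestrict_iff, ← LinearMap.ker_eq_bot, ← Submodule.finrank_eq_zero,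
    ← LinearMap.range_domRestrict]
  have := (f.domRestrict p).finrank_range_add_finrank_ker
  omega

section IncidenceMatrix

open Matrix

variable {V E : Type} [DecidableEq V] (th hd : E → V)

def incidenceMatrix (R : Type*) [Ring R] : Matrix E V R := of fun e v => (incid th hd e v : R)

theorem incidenceMatrix_map {R S : Type*} [Ring R] [Ring S] (f : R →+* S) :
    (incidenceMatrix th hd R).map f = incidenceMatrix th hd S := by
  ext; simp [incidenceMatrix]

theorem sum_incid [Fintype V] (e : E) : ∑ v, incid th hd e v = 0 := by
  simp [incid]

theorem incidenceMatrix_mulVec_apply [Fintype V] {R : Type*} [CommRing R] (z : V → R) (e : E) :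
    (incidenceMatrix th hd R *ᵥ z) e = z (hd e) - z (th e) := by
  simp [incidenceMatrix, incid, mulVec, dotProduct, sub_mul, Finset.sum_sub_distrib]

theorem isCycle_univ_iff [Fintype E] (x : E → ℤ) :
    IsCycle th hd Finset.univ x ↔ x ᵥ* incidenceMatrix th hd ℤ = 0 := by
  simp [IsCycle, funext_iff, vecMul, dotProduct, incidenceMatrix]

theorem incid_comp_eq_single_or_sum_eq_zero {ι : Type*} [Fintype ι] [DecidableEq ι] {g : ι → V}
    (hg : g.Injective) (e : E) :
    (∃ j, ∃ s : SignType, (fun j => incid th hd e (g j)) = Pi.single j (s : ℤ)) ∨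
      ∑ j, incid th hd e (g j) = 0 := by
  by_cases hh : ∃ j, g j = hd e <;> by_cases ht : ∃ j, g j = th e
  · obtain ⟨j₁, hj₁⟩ := hh
    obtain ⟨j₂, hj₂⟩ := ht
    right
    simp [incid, Finset.sum_sub_distrib, ← hj₁, ← hj₂, hg.eq_iff]
  · obtain ⟨j₁, hj₁⟩ := hh
    push Not at ht
    refine Or.inl ⟨j₁, 1, funext fun j => ?_⟩
    by_cases h : j = j₁
    · simp [incid, h, ← hj₁, (ht j₁).symm]
    · simp [incid, ← hj₁, hg.eq_iff, h, Ne.symm h, (ht j).symm]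
  · obtain ⟨j₂, hj₂⟩ := ht
    push Not at hh
    refine Or.inl ⟨j₂, -1, funext fun j => ?_⟩
    by_cases h : j = j₂
    · simp [incid, h, ← hj₂, (hh j₂).symm]
    · simp [incid, ← hj₂, hg.eq_iff, h, Ne.symm h, (hh j).symm]
  · push Not at hh ht
    right
    simp [incid, fun j => (hh j).symm, fun j => (ht j).symm]

theorem incidenceMatrix_isTotallyUnimodular :
    (incidenceMatrix th hd ℤ).IsTotallyUnimodular := by
  intro k
  induction k with
  | zero => intro f g _ _; exact ⟨1, by simp⟩
  | succ k ih =>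
    intro f g hf hg
    by_cases hrow : ∃ i j, ∃ s : SignType,
        (fun j => incid th hd (f i) (g j)) = Pi.single j (s : ℤ)
    · obtain ⟨i, j, s, hs⟩ := hrow
      have hrow' : ∀ j', incidenceMatrix th hd ℤ (f i) (g j') =
          (Pi.single j (s : ℤ) : Fin (k + 1) → ℤ) j' := fun j' => congrFun hs j'
      rw [det_succ_row _ i, Fintype.sum_eq_single j fun j' hj' => by
        simp [hrow' j', Pi.single_eq_of_ne hj']]
      simp only [submatrix_apply, hrow', Pi.single_eq_same, submatrix_submatrix]
      change _ ∈ MonoidHom.mrange SignType.castHom.toMonoidHom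
      have hneg : (-1 : ℤ) ∈ MonoidHom.mrange SignType.castHom.toMonoidHom := ⟨-1, by simp⟩
      exact mul_mem (mul_mem (pow_mem hneg _) (Set.mem_range_self s))
        (ih _ _ (hf.comp Fin.succAbove_right_injective) (hg.comp Fin.succAbove_right_injective))
    · -- every row sums to zero, so the all-ones vector is in the kernel
      push Not at hrow
      refine ⟨0, (exists_mulVec_eq_zero_iff.mp ⟨fun _ => 1, one_ne_zero, funext fun i => ?_⟩).symm⟩
      have := (incid_comp_eq_single_or_sum_eq_zero th hd hg (f i)).resolve_left
        fun ⟨j, s, hs⟩ => hrow i j s hs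
      simpa [mulVec, dotProduct, incidenceMatrix] using this

end IncidenceMatrix

section CycleSpace

open Matrix Module

variable {V E : Type} [DecidableEq V] [Fintype E] (th hd : E → V)

def cycleSpace : Submodule ℚ (E → ℚ) := LinearMap.ker (incidenceMatrix th hd ℚ).vecMulLinear

theorem intCast_mem_cycleSpace_iff (x : E → ℤ) :
    ((↑) ∘ x : E → ℚ) ∈ cycleSpace th hd ↔ IsCycle th hd Finset.univ x := by
  rw [isCycle_univ_iff, cycleSpace, LinearMap.mem_ker, coe_vecMulLinear, funext_iff, funext_iff,
    ← incidenceMatrix_map th hd (Int.castRingHom ℚ)]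
  refine forall_congr' fun v => ?_
  rw [show ((↑) ∘ x : E → ℚ) = Int.castRingHom ℚ ∘ x from rfl]
  simp only [← RingHom.map_vecMul, Pi.zero_apply, eq_intCast, Int.cast_eq_zero]

variable [Fintype V]

theorem Conn.apply_eq_of_mulVec_eq_zero {R : Type*} [CommRing R] {th hd : E → V}
    (hconn : Conn th hd Finset.univ) {z : V → R} (hz : incidenceMatrix th hd R *ᵥ z = 0)
    (u v : V) : z u = z v := by
  induction hconn u v with
  | rel a b hab =>
    obtain ⟨e, -, ⟨rfl, rfl⟩ | ⟨rfl, rfl⟩⟩ := hab <;>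
      have he := congrFun hz e <;>
      rw [incidenceMatrix_mulVec_apply, Pi.zero_apply, sub_eq_zero] at he
    exacts [he.symm, he]
  | refl => rfl
  | symm _ _ _ ih => exact ih.symm
  | trans _ _ _ _ _ ih₁ ih₂ => exact ih₁.trans ih₂

theorem Conn.finrank_ker_le_one {th hd : E → V} (hconn : Conn th hd Finset.univ) :
    finrank ℚ (LinearMap.ker (incidenceMatrix th hd ℚ).mulVecLin) ≤ 1 := by
  refine (Submodule.finrank_mono fun z hz => ?_).trans
    ((finrank_span_le_card {(1 : V → ℚ)}).trans (by simp))
  rw [Submodule.mem_span_singleton]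
  rcases isEmpty_or_nonempty V with hV | hV
  · exact ⟨0, Subsingleton.elim _ _⟩
  · obtain ⟨u⟩ := hV
    exact ⟨z u, funext fun v => by simpa using hconn.apply_eq_of_mulVec_eq_zero hz u v⟩

theorem Conn.linearIndependent_incidence_cols {th hd : E → V} (hconn : Conn th hd Finset.univ)
    (v₀ : V) :
    LinearIndependent ℚ
      ((incidenceMatrix th hd ℚ).submatrix id (Subtype.val : {w // w ≠ v₀} → V)).col := by
  rw [← mulVec_injective_iff, ← coe_mulVecLin, injective_iff_map_eq_zero]
  intro a ha
  -- extend `a` by `0` at `v₀` to a potential on all of `V`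
  set z : V → ℚ := fun v => if h : v = v₀ then 0 else a ⟨v, h⟩
  have hz : incidenceMatrix th hd ℚ *ᵥ z = 0 := by
    rw [← ha]
    funext e
    simp only [mulVec, dotProduct, Fintype.sum_eq_add_sum_subtype_ne _ v₀, z, dif_pos, mul_zero,
      zero_add]
    exact Finset.sum_congr rfl fun w _ => by rw [dif_neg w.2]; rfl
  funext w
  simpa [z, w.2] using hconn.apply_eq_of_mulVec_eq_zero hz w v₀

theorem two_le_finrank_ker_of_not_conn (h : ¬ Conn th hd Finset.univ) :
    2 ≤ finrank ℚ (LinearMap.ker (incidenceMatrix th hd ℚ).mulVecLin) := by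
  classical
  obtain ⟨u, v, huv⟩ : ∃ u v, ¬ Relation.EqvGen (adjS th hd Finset.univ) u v := by
    simpa [Conn] using h
  -- the indicator of the component of `u`, and the constant function `1`
  set χ : V → ℚ := fun w => if Relation.EqvGen (adjS th hd Finset.univ) u w then 1 else 0
  have hedge : ∀ e, Relation.EqvGen (adjS th hd Finset.univ) (th e) (hd e) :=
    fun e => .rel _ _ ⟨e, Finset.mem_univ e, .inl ⟨rfl, rfl⟩⟩
  have hχ : χ ∈ LinearMap.ker (incidenceMatrix th hd ℚ).mulVecLin := by
    refine LinearMap.mem_ker.mpr (funext fun e => ?_)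
    have : Relation.EqvGen (adjS th hd Finset.univ) u (hd e) ↔
        Relation.EqvGen (adjS th hd Finset.univ) u (th e) :=
      ⟨fun h => h.trans _ _ _ ((hedge e).symm _ _), fun h => h.trans _ _ _ (hedge e)⟩
    simp [incidenceMatrix_mulVec_apply, χ, this]
  have h1 : (1 : V → ℚ) ∈ LinearMap.ker (incidenceMatrix th hd ℚ).mulVecLin :=
    LinearMap.mem_ker.mpr (funext fun e => by simp [incidenceMatrix_mulVec_apply])
  have hli : LinearIndependent ℚ ![(⟨χ, hχ⟩ : LinearMap.ker _), ⟨1, h1⟩] := by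
    rw [LinearIndependent.pair_iff]
    intro s t hst
    have hu := congrFun (congrArg Subtype.val hst) u
    have hv := congrFun (congrArg Subtype.val hst) v
    simp [χ, huv, Relation.EqvGen.refl] at hu hv
    exact ⟨by linarith, hv⟩
  simpa using hli.fintype_card_le_finrank

theorem finrank_ker_le_one_iff_conn :
    finrank ℚ (LinearMap.ker (incidenceMatrix th hd ℚ).mulVecLin) ≤ 1 ↔ Conn th hd Finset.univ :=
  ⟨fun h => by_contra fun hc => by have := two_le_finrank_ker_of_not_conn th hd hc; omega,
    Conn.finrank_ker_le_one⟩

theorem finrank_cycleSpace_eq (hcard : Fintype.card E = Fintype.card V) :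
    finrank ℚ (cycleSpace th hd) =
      finrank ℚ (LinearMap.ker (incidenceMatrix th hd ℚ).mulVecLin) := by
  have hE := (incidenceMatrix th hd ℚ).vecMulLinear.finrank_range_add_finrank_ker
  have hV := (incidenceMatrix th hd ℚ).mulVecLin.finrank_range_add_finrank_ker
  have hT : finrank ℚ (LinearMap.range (incidenceMatrix th hd ℚ).vecMulLinear) =
      finrank ℚ (LinearMap.range (incidenceMatrix th hd ℚ).mulVecLin) := by
    rw [← mulVecLin_transpose]; exact rank_transpose _
  rw [finrank_pi] at hE hV
  rw [cycleSpace]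
  omega

theorem Conn.exists_eq_smul_of_isCycle {th hd : E → V} (hconn : Conn th hd Finset.univ)
    (hcard : Fintype.card E = Fintype.card V) {x : E → ℤ} (hx : IsCycle th hd Finset.univ x)
    {e₀ : E} (hx₀ : IsUnit (x e₀)) {z : E → ℤ} (hz : IsCycle th hd Finset.univ z) :
    ∃ m : ℤ, z = m • x := by
  have hxQ := (intCast_mem_cycleSpace_iff th hd x).mpr hx
  have hx0 : (⟨_, hxQ⟩ : cycleSpace th hd) ≠ 0 := fun h => by
    simpa using hx₀.ne_zero (by simpa using congrFun (congrArg Subtype.val h) e₀)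
  have hdim : finrank ℚ (cycleSpace th hd) = 1 :=
    le_antisymm ((finrank_cycleSpace_eq th hd hcard).trans_le hconn.finrank_ker_le_one)
      (finrank_pos_iff_exists_ne_zero.mpr ⟨_, hx0⟩)
  obtain ⟨r, hr⟩ := exists_smul_eq_of_finrank_eq_one hdim hx0
    ⟨_, (intCast_mem_cycleSpace_iff th hd z).mpr hz⟩
  have hzx : ∀ e, (z e : ℚ) = r * x e := fun e => by
    simpa using (congrFun (congrArg Subtype.val hr) e).symm
  -- `r` is the integer `z e₀ * x e₀`, as `x e₀ = ±1`
  have hsq : (x e₀ : ℚ) * x e₀ = 1 := by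
    rcases Int.isUnit_iff.mp hx₀ with h | h <;> simp [h]
  refine ⟨z e₀ * x e₀, funext fun e => ?_⟩
  have : (z e : ℚ) = (z e₀ * x e₀) * x e := by
    rw [hzx e, hzx e₀]
    linear_combination -(r * x e) * hsq
  exact_mod_cast this

theorem Conn.exists_isUnit_eq_smul_of_isCycle {th hd : E → V} (hconn : Conn th hd Finset.univ)
    (hcard : Fintype.card E = Fintype.card V) {x y : E → ℤ} (hx : IsCycle th hd Finset.univ x)
    {e₀ : E} (hx₀ : IsUnit (x e₀)) (hy : IsCycle th hd Finset.univ y) {e₁ : E}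
    (hy₁ : IsUnit (y e₁)) : ∃ m : ℤ, IsUnit m ∧ y = m • x := by
  obtain ⟨m, rfl⟩ := hconn.exists_eq_smul_of_isCycle hcard hx hx₀ hy
  exact ⟨m, isUnit_of_mul_isUnit_left (by simpa using hy₁), rfl⟩

end CycleSpace

section Colors

open Matrix Module

variable {V E : Type} [DecidableEq V] (th hd : E → V) (γ : E → ℤ × ℤ)

def colorCols (R : Type*) [Ring R] : Matrix E (Fin 2) R :=
  of fun e q => ((if q = 0 then (γ e).1 else (γ e).2 : ℤ) : R)

/-- `M_{1,1,2}(G,γ)` with every `a_e` set to `1`. -/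
def colorMatrix (R : Type*) [Ring R] : Matrix E (V ⊕ Fin 2) R :=
  fromCols (incidenceMatrix th hd R) (colorCols γ R)

theorem colorCols_map {R S : Type*} [Ring R] [Ring S] (f : R →+* S) :
    (colorCols γ R).map f = colorCols γ S := by
  ext; simp only [colorCols, map_apply, of_apply, map_intCast]

theorem colorMatrix_map {R S : Type*} [Ring R] [Ring S] (f : R →+* S) :
    (colorMatrix th hd γ R).map f = colorMatrix th hd γ S := by
  rw [colorMatrix, colorMatrix, fromCols_map, incidenceMatrix_map, colorCols_map]

variable [Fintype E]

theorem vecMul_colorCols_apply (x : E → ℤ) (q : Fin 2) :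
    (x ᵥ* colorCols γ ℤ) q = if q = 0 then (rho γ x).1 else (rho γ x).2 := by
  fin_cases q <;> simp [colorCols, vecMul, dotProduct, rho, Prod.fst_sum, Prod.snd_sum]

theorem rho_smul (m : ℤ) (x : E → ℤ) : rho γ (m • x) = m • rho γ x := by
  simp [rho, Finset.smul_sum, mul_smul]

def rhoQ : (E → ℚ) →ₗ[ℚ] ℚ × ℚ :=
  (LinearEquiv.finTwoArrow ℚ ℚ).toLinearMap ∘ₗ (colorCols γ ℚ).vecMulLinear

theorem rhoQ_intCast (x : E → ℤ) : rhoQ γ ((↑) ∘ x) = q2 (rho γ x) := by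
  have h : ∀ q, ((↑) ∘ x ᵥ* colorCols γ ℚ) q = ((x ᵥ* colorCols γ ℤ) q : ℚ) := fun q => by
    rw [← colorCols_map γ (Int.castRingHom ℚ),
      show ((↑) ∘ x : E → ℚ) = Int.castRingHom ℚ ∘ x from rfl, ← RingHom.map_vecMul, eq_intCast]
  simp [rhoQ, q2, h, vecMul_colorCols_apply]

theorem span_rho_cycles_eq_map :
    Submodule.span ℚ (q2 '' (rho γ '' {x | IsCycle th hd Finset.univ x})) =
      (cycleSpace th hd).map (rhoQ γ) := by
  refine le_antisymm (Submodule.span_le.mpr ?_) ?_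
  · rintro _ ⟨_, ⟨x, hx, rfl⟩, rfl⟩
    exact ⟨_, (intCast_mem_cycleSpace_iff th hd x).mpr hx, rhoQ_intCast γ x⟩
  · rintro _ ⟨y, hy, rfl⟩
    -- clear the denominators of `y`
    obtain ⟨⟨b, hb⟩, hint⟩ := IsLocalization.exist_integer_multiples_of_finite (nonZeroDivisors ℤ) y
    choose z hz using hint
    have hzy : ((↑) ∘ z : E → ℚ) = (b : ℚ) • y := funext fun e => by simpa using hz e
    have hzc : IsCycle th hd Finset.univ z :=
      (intCast_mem_cycleSpace_iff th hd z).mp (hzy ▸ Submodule.smul_mem _ _ hy)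
    have hb0 : (b : ℚ) ≠ 0 := by exact_mod_cast nonZeroDivisors.ne_zero hb
    have : rhoQ γ y = (b : ℚ)⁻¹ • q2 (rho γ z) := by
      rw [← rhoQ_intCast, hzy, map_smul, inv_smul_smul₀ hb0]
    rw [this]
    exact Submodule.smul_mem _ _ (Submodule.subset_span ⟨_, ⟨z, hzc, rfl⟩, rfl⟩)

theorem nonempty_of_zrank_eq_one (hrk : zrank th hd γ Finset.univ = 1) : Nonempty E := by
  by_contra hE
  rw [not_nonempty_iff] at hE
  rw [zrank, span_rho_cycles_eq_map, Subsingleton.elim (cycleSpace th hd) ⊥, Submodule.map_bot,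
    finrank_bot] at hrk
  exact zero_ne_one hrk

theorem colorMatrix_rank_eq_card_iff [Fintype V] :
    (colorMatrix th hd γ ℚ).rank = Fintype.card E ↔
      Disjoint (cycleSpace th hd) (LinearMap.ker (rhoQ γ)) := by
  have hker : LinearMap.ker (colorMatrix th hd γ ℚ).vecMulLinear =
      cycleSpace th hd ⊓ LinearMap.ker (rhoQ γ) := by
    ext x
    simp [colorMatrix, cycleSpace, rhoQ, vecMul_fromCols, ← Sum.elim_zero_zero, Sum.elim_eq_iff]
  rw [rank_eq_finrank_span_row, eq_comm, ← Set.finrank,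
    ← linearIndependent_iff_card_eq_finrank_span, ← vecMul_injective_iff, disjoint_iff, ← hker,
    LinearMap.ker_eq_bot, coe_vecMulLinear]

end Colors

section GenericMatrix

open Matrix Module MvPolynomial

variable {V E : Type} [Fintype V] [DecidableEq V] [Fintype E] [DecidableEq E] (th hd : E → V)
  (γ : E → ℤ × ℤ)

theorem of_Ment_eq : (of fun e c => Ment th hd γ e c) =
    diagonal (fun e => (X e : MvPolynomial E ℚ)) * colorMatrix th hd γ (MvPolynomial E ℚ) := by
  refine Matrix.ext fun e c => ?_
  rcases c with w | q
  · simp only [Ment, colorMatrix, incidenceMatrix, incid, diagonal_mul, of_apply,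
      fromCols_apply_inl]
    split_ifs <;> simp
  · simp [Ment, colorMatrix, colorCols, diagonal_mul, mul_comm]

theorem rank_Ment_eq_card_iff : (of fun e c => Ment th hd γ e c).rank = Fintype.card E ↔
    Disjoint (cycleSpace th hd) (LinearMap.ker (rhoQ γ)) := by
  have hdet : (diagonal fun e => (X e : MvPolynomial E ℚ)).det ≠ 0 := by
    simp [det_diagonal, Finset.prod_ne_zero_iff, X_ne_zero]
  rw [of_Ment_eq, rank_mul_eq_right_of_det_ne_zero _ _ hdet,
    ← colorMatrix_map th hd γ (algebraMap ℚ (MvPolynomial E ℚ)), rank_map_eq_card_height_iff,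
    colorMatrix_rank_eq_card_iff]

theorem conn_iff_rank_Ment_eq (hcard : Fintype.card E = Fintype.card V)
    (hrk : zrank th hd γ Finset.univ = 1) :
    Conn th hd Finset.univ ↔ (of fun e c => Ment th hd γ e c).rank = Fintype.card V := by
  have hmap : finrank ℚ ((cycleSpace th hd).map (rhoQ γ)) = 1 := by
    rw [← span_rho_cycles_eq_map]; exact hrk
  have hpos := hmap ▸ Submodule.finrank_map_le (rhoQ γ) (cycleSpace th hd)
  rw [← hcard, rank_Ment_eq_card_iff, Submodule.disjoint_ker_iff_finrank_map_eq, hmap,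
    ← finrank_ker_le_one_iff_conn, ← finrank_cycleSpace_eq th hd hcard]
  omega

end GenericMatrix

section CofactorCycle

open Matrix Module

variable {V E : Type} [DecidableEq V] [Fintype E] [DecidableEq E] (th hd : E → V)

/-- The cofactors along the added column of `[B | y]`, where `B` is the incidence matrix without
the column of `v₀`: `det [B | y] = ∑ e, y e * cofactorCycle th hd v₀ eqv e`. -/
def cofactorCycle (v₀ : V) (eqv : E ≃ {w // w ≠ v₀} ⊕ Unit) (e : E) : ℤ :=
  (adjoinCol ((incidenceMatrix th hd ℤ).submatrix id Subtype.val) eqv (Pi.single e 1)).det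

theorem cofactorCycle_mem_range (v₀ : V) (eqv : E ≃ {w // w ≠ v₀} ⊕ Unit) (e : E) :
    cofactorCycle th hd v₀ eqv e ∈ Set.range SignType.cast :=
  ((incidenceMatrix_isTotallyUnimodular th hd).submatrix _ _).det_adjoinCol_single eqv e

variable [Fintype V]

theorem isCycle_cofactorCycle (v₀ : V) (eqv : E ≃ {w // w ≠ v₀} ⊕ Unit) :
    IsCycle th hd Finset.univ (cofactorCycle th hd v₀ eqv) := by
  rw [isCycle_univ_iff]
  have hw : ∀ w : {w // w ≠ v₀},
      (cofactorCycle th hd v₀ eqv ᵥ* incidenceMatrix th hd ℤ) w = 0 := fun w => by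
    rw [← det_adjoinCol_col ((incidenceMatrix th hd ℤ).submatrix id Subtype.val) eqv w,
      det_adjoinCol]
    simp [vecMul, dotProduct, mul_comm, cofactorCycle]
  funext v
  by_cases hv : v = v₀
  · -- the column of `v₀` is minus the sum of the other columns
    subst hv
    have hcol : ∀ e, incidenceMatrix th hd ℤ e v =
        -∑ w : {w // w ≠ v}, incidenceMatrix th hd ℤ e w := fun e => by
      have := sum_incid th hd e
      rw [Fintype.sum_eq_add_sum_subtype_ne _ v] at this
      simp only [incidenceMatrix, of_apply, Int.cast_id]
      omega
    simp only [vecMul, dotProduct, hcol, mul_neg, Finset.mul_sum, Finset.sum_neg_distrib] at hw ⊢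
    rw [Finset.sum_comm]
    simp [hw]
  · exact hw ⟨v, hv⟩

theorem Conn.cofactorCycle_ne_zero {th hd : E → V} (hconn : Conn th hd Finset.univ) (v₀ : V)
    (eqv : E ≃ {w // w ≠ v₀} ⊕ Unit) : cofactorCycle th hd v₀ eqv ≠ 0 := by
  obtain ⟨y, hy⟩ := exists_det_adjoinCol_ne_zero _ eqv (hconn.linearIndependent_incidence_cols v₀)
  intro h0
  refine hy ((det_adjoinCol _ _ _).trans (Finset.sum_eq_zero fun e _ => ?_))
  have hcast : (adjoinCol ((incidenceMatrix th hd ℚ).submatrix id Subtype.val) eqv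
      (Pi.single e 1)).det = (cofactorCycle th hd v₀ eqv e : ℚ) := by
    rw [cofactorCycle, ← eq_intCast (Int.castRingHom ℚ), RingHom.map_det, RingHom.mapMatrix_apply,
      adjoinCol_map, ← submatrix_map, incidenceMatrix_map]
    congr
    funext i
    simp [Pi.single_apply]
  rw [hcast, h0]
  simp

theorem Conn.exists_isUnit_cofactorCycle {th hd : E → V} (hconn : Conn th hd Finset.univ)
    (v₀ : V) (eqv : E ≃ {w // w ≠ v₀} ⊕ Unit) : ∃ e, IsUnit (cofactorCycle th hd v₀ eqv e) := by
  obtain ⟨e, he⟩ := Function.ne_iff.mp (hconn.cofactorCycle_ne_zero v₀ eqv)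
  obtain ⟨s, hs⟩ := cofactorCycle_mem_range th hd v₀ eqv e
  refine ⟨e, ?_⟩
  rw [← hs] at he ⊢
  rcases s with _ | _ | _ <;> simp at he ⊢

end CofactorCycle

section Minor

open Matrix Module MvPolynomial

variable {V E : Type} [Fintype V] [DecidableEq V] [Fintype E] [DecidableEq E] (th hd : E → V)
  (γ : E → ℤ × ℤ)

theorem det_Ment_minor (v₀ : V) (q : Fin 2) (eqv : E ≃ ({w : V // w ≠ v₀} ⊕ Unit)) :
    det (of fun e f : E => Ment th hd γ e (Sum.elim (fun w : {w : V // w ≠ v₀} =>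
        (Sum.inl (w : V) : V ⊕ Fin 2)) (fun _ => Sum.inr q) (eqv f))) =
      (∏ e, X e) * ((if q = 0 then (rho γ (cofactorCycle th hd v₀ eqv)).1
        else (rho γ (cofactorCycle th hd v₀ eqv)).2 : ℤ) : MvPolynomial E ℚ) := by
  set B := (incidenceMatrix th hd ℤ).submatrix id (Subtype.val : {w // w ≠ v₀} → V)
  have hfactor : (of fun e f : E => Ment th hd γ e (Sum.elim (fun w : {w : V // w ≠ v₀} =>
      (Sum.inl (w : V) : V ⊕ Fin 2)) (fun _ => Sum.inr q) (eqv f))) =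
      diagonal (fun e => (X e : MvPolynomial E ℚ)) *
        (adjoinCol B eqv fun e => colorCols γ ℤ e q).map (Int.castRingHom _) := by
    refine Matrix.ext fun e f => ?_
    rw [of_apply, ← of_apply (f := fun e c => Ment th hd γ e c), of_Ment_eq, diagonal_mul,
      diagonal_mul]
    rcases h : eqv f with w | u <;> simp [adjoinCol, colorMatrix, incidenceMatrix, colorCols, B, h]
  have hdet : (adjoinCol B eqv fun e => colorCols γ ℤ e q).det =
      if q = 0 then (rho γ (cofactorCycle th hd v₀ eqv)).1
        else (rho γ (cofactorCycle th hd v₀ eqv)).2 := by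
    rw [det_adjoinCol, ← vecMul_colorCols_apply]
    simp [vecMul, dotProduct, mul_comm, cofactorCycle, B]
  rw [hfactor, det_mul, det_diagonal, ← RingHom.mapMatrix_apply, ← RingHom.map_det, hdet,
    eq_intCast]

end Minor

/-- For a colored graph with `n` vertices, `n` edges and ℤ²-rank 1: it is a `(1,1,1)`-graph
iff `M_{1,1,2}(G,γ)` has rank `n`; moreover, if so, with `t = ρ(C)` for the unique cycle `C`
(a generator of the group of cycle images), the `n×n` minor keeping all vertex columns but
one together with the `q`-th extra column has determinant `± t_q · ∏ a_e`. -/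
theorem statement15 {V E : Type} [Fintype V] [DecidableEq V] [Fintype E] [DecidableEq E]
    (th hd : E → V) (γ : E → ℤ × ℤ)
    (hcard : Fintype.card E = Fintype.card V)
    (hrk : zrank th hd γ Finset.univ = 1) :
    ((Conn th hd Finset.univ ∧ zrank th hd γ Finset.univ = 1) ↔
      (Matrix.of fun (e : E) (c : V ⊕ Fin 2) => Ment th hd γ e c).rank = Fintype.card V) ∧
    (Conn th hd Finset.univ →
      ∃ t : ℤ × ℤ,
        (∃ x, IsCycle th hd Finset.univ x ∧ rho γ x = t) ∧
        (∀ x, IsCycle th hd Finset.univ x → ∃ m : ℤ, rho γ x = m • t) ∧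
        ∀ (v₀ : V) (q : Fin 2) (eqv : E ≃ ({w : V // w ≠ v₀} ⊕ Unit)),
          Matrix.det (Matrix.of fun e f : E =>
              Ment th hd γ e (Sum.elim (fun w : {w : V // w ≠ v₀} => (Sum.inl (w : V) : V ⊕ Fin 2)) (fun _ => Sum.inr q) (eqv f)))
            = (((if q = 0 then t.1 else t.2) : ℤ) : MvPolynomial E ℚ) * ∏ e, MvPolynomial.X e ∨
          Matrix.det (Matrix.of fun e f : E =>
              Ment th hd γ e (Sum.elim (fun w : {w : V // w ≠ v₀} => (Sum.inl (w : V) : V ⊕ Fin 2)) (fun _ => Sum.inr q) (eqv f)))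
            = -((((if q = 0 then t.1 else t.2) : ℤ) : MvPolynomial E ℚ) * ∏ e, MvPolynomial.X e)) := by
  refine ⟨by rw [and_iff_left hrk]; exact conn_iff_rank_Ment_eq th hd γ hcard hrk, fun hconn => ?_⟩
  obtain ⟨e⟩ := nonempty_of_zrank_eq_one th hd γ hrk
  have eqv₀ : E ≃ ({w : V // w ≠ th e} ⊕ Unit) := Fintype.equivOfCardEq <| by
    simp [hcard, Fintype.card_subtype_compl, Nat.sub_add_cancel (Fintype.card_pos_iff.mpr ⟨th e⟩)]
  obtain ⟨x, hx, e₀, he₀⟩ : ∃ x, IsCycle th hd Finset.univ x ∧ ∃ e₀, IsUnit (x e₀) :=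
    ⟨_, isCycle_cofactorCycle th hd (th e) eqv₀, hconn.exists_isUnit_cofactorCycle (th e) eqv₀⟩
  refine ⟨rho γ x, ⟨x, hx, rfl⟩, fun z hz => ?_, fun v₀ q eqv => ?_⟩
  · obtain ⟨m, rfl⟩ := hconn.exists_eq_smul_of_isCycle hcard hx he₀ hz
    exact ⟨m, rho_smul γ m x⟩
  · obtain ⟨e₁, he₁⟩ := hconn.exists_isUnit_cofactorCycle v₀ eqv
    obtain ⟨m, hm, hmx⟩ := hconn.exists_isUnit_eq_smul_of_isCycle hcard hx he₀
      (isCycle_cofactorCycle th hd v₀ eqv) he₁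
    rw [det_Ment_minor, hmx, rho_smul]
    rcases Int.isUnit_iff.mp hm with rfl | rfl
    · left; simp [mul_comm]
    · right; split_ifs <;> simp [mul_comm]
end
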